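/- For δ ∈ (0, 1/(2√2)] and the radial function λ_δ(r) = r√(1 − δ²r²), the Hessian of x ↦ λ_δ(|x|) on the annulus A = {x ∈ ℝⁿ : 1/2 < |x| < 2} has nonzero determinant, hence rank n, at every point of A. -/

import Mathlib

/-!
Write `λ_δ(|x|) = φ(|x|²)` with `φ(t) = √(t - δ²t²)`. Since `|·|²` is a quadratic form, the
Hessian at `x` is `2φ'(s) I + 4φ''(s) x xᵀ` with `s = |x|²`: a scalar matrix plus a rank-one
matrix. By the matrix determinant lemma its determinant is `(2φ'(s))^(n-1) (2φ'(s) + 4sφ''(s))`,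
which is `(λ_δ'(r)/r)^(n-1) λ_δ''(r)` for `r = |x|`. On the annulus `2δ²r² < 1`, so `λ_δ' > 0`,
while `λ_δ''(r) = δ²r⁴(2δ²r² - 3) / φ(r²)³ < 0` wherever `δ²r² < 1`.
-/

open Matrix Filter Topology
open scoped RealInnerProductSpace

theorem Matrix.det_smul_one_add_vecMulVec {K m : Type*} [Field K] [Fintype m] [DecidableEq m]
    {b : K} (hb : b ≠ 0) (u v : m → K) :
    (b • (1 : Matrix m m K) + vecMulVec u v).det = b ^ Fintype.card m * (1 + v ⬝ᵥ u / b) := by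
  have hfactor : b • (1 : Matrix m m K) + vecMulVec u v = b • (1 + vecMulVec (b⁻¹ • u) v) := by
    rw [smul_add, smul_vecMulVec, smul_smul, mul_inv_cancel₀ hb, one_smul]
  rw [hfactor, det_smul, vecMulVec_eq Unit, det_one_add_replicateCol_mul_replicateRow,
    dotProduct_smul, smul_eq_mul, inv_mul_eq_div]

noncomputable def hessianMatrix {ι : Type*} [Fintype ι] [DecidableEq ι]
    (f : EuclideanSpace ℝ ι → ℝ) (x : EuclideanSpace ℝ ι) : Matrix ι ι ℝ :=
  Matrix.of fun j k =>
    fderiv ℝ (fun y => fderiv ℝ f y (EuclideanSpace.single k 1)) x (EuclideanSpace.single j 1)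

theorem fderiv_fderiv_comp_norm_sq_apply {E : Type*} [NormedAddCommGroup E]
    [InnerProductSpace ℝ E] {φ φ' : ℝ → ℝ} {φ'' : ℝ} {x : E}
    (hφ : ∀ᶠ t in 𝓝 (‖x‖ ^ 2), HasDerivAt φ (φ' t) t) (hφ' : HasDerivAt φ' φ'' (‖x‖ ^ 2))
    (u v : E) :
    fderiv ℝ (fun y => fderiv ℝ (fun z => φ (‖z‖ ^ 2)) y u) x v
      = 2 * φ' (‖x‖ ^ 2) * ⟪u, v⟫ + 4 * φ'' * ⟪x, u⟫ * ⟪x, v⟫ := by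
  have hnorm_sq (y : E) : HasFDerivAt (fun z : E => ‖z‖ ^ 2) (2 • innerSL ℝ y) y :=
    (hasStrictFDerivAt_norm_sq y).hasFDerivAt
  have hgrad : (fun y => fderiv ℝ (fun z => φ (‖z‖ ^ 2)) y u)
      =ᶠ[𝓝 x] fun y => φ' (‖y‖ ^ 2) * (2 * ⟪u, y⟫) := by
    have hcont : Tendsto (fun y : E => ‖y‖ ^ 2) (𝓝 x) (𝓝 (‖x‖ ^ 2)) :=
      (continuous_norm.pow 2).continuousAt
    filter_upwards [hcont.eventually hφ] with y hy
    have hderiv : HasFDerivAt (fun z => φ (‖z‖ ^ 2)) _ y := hy.comp_hasFDerivAt y (hnorm_sq y)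
    simp [hderiv.fderiv, real_inner_comm]
  have hgrad_deriv : HasFDerivAt (fun y => φ' (‖y‖ ^ 2) * (2 * ⟪u, y⟫)) _ x :=
    (hφ'.comp_hasFDerivAt x (hnorm_sq x)).mul (((innerSL ℝ u).hasFDerivAt).const_mul 2)
  simp [hgrad.fderiv_eq, hgrad_deriv.fderiv, real_inner_comm]
  ring

theorem hessianMatrix_comp_norm_sq {ι : Type*} [Fintype ι] [DecidableEq ι] {φ φ' : ℝ → ℝ}
    {φ'' : ℝ} {x : EuclideanSpace ℝ ι}
    (hφ : ∀ᶠ t in 𝓝 (‖x‖ ^ 2), HasDerivAt φ (φ' t) t) (hφ' : HasDerivAt φ' φ'' (‖x‖ ^ 2)) :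
    hessianMatrix (fun z => φ (‖z‖ ^ 2)) x
      = (2 * φ' (‖x‖ ^ 2)) • 1 + vecMulVec ((4 * φ'') • WithLp.ofLp x) (WithLp.ofLp x) := by
  ext j k
  simp [hessianMatrix, fderiv_fderiv_comp_norm_sq_apply hφ hφ', one_apply, vecMulVec_apply,
    EuclideanSpace.inner_single_right, eq_comm]
  ring

/-- The profile `λ_δ` in the variable `t = r²`: `λ_δ(r) = lambdaOfSq δ (r²)` for `r ≥ 0`. -/
noncomputable def lambdaOfSq (δ t : ℝ) : ℝ := √(t - δ ^ 2 * t ^ 2)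

namespace lambdaOfSq

variable {δ t : ℝ}

theorem pos (ht : 0 < t - δ ^ 2 * t ^ 2) : 0 < lambdaOfSq δ t :=
  Real.sqrt_pos.mpr ht

theorem sq_eq (ht : 0 ≤ t - δ ^ 2 * t ^ 2) : lambdaOfSq δ t ^ 2 = t - δ ^ 2 * t ^ 2 :=
  Real.sq_sqrt ht

theorem apply_sq_eq {r : ℝ} (hr : 0 ≤ r) : lambdaOfSq δ (r ^ 2) = r * √(1 - δ ^ 2 * r ^ 2) := by
  rw [lambdaOfSq, show r ^ 2 - δ ^ 2 * (r ^ 2) ^ 2 = r ^ 2 * (1 - δ ^ 2 * r ^ 2) by ring,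
    Real.sqrt_mul (sq_nonneg r), Real.sqrt_sq hr]

theorem hasDerivAt (ht : 0 < t - δ ^ 2 * t ^ 2) :
    HasDerivAt (lambdaOfSq δ) ((1 - 2 * δ ^ 2 * t) / (2 * lambdaOfSq δ t)) t := by
  have hpoly : HasDerivAt (fun t => t - δ ^ 2 * t ^ 2) (1 - 2 * δ ^ 2 * t) t :=
    ((hasDerivAt_id' t).sub ((hasDerivAt_pow 2 t).const_mul (δ ^ 2))).congr_deriv (by ring)
  exact hpoly.sqrt ht.ne'

theorem hasDerivAt_deriv (ht : 0 < t - δ ^ 2 * t ^ 2) :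
    HasDerivAt (fun t => (1 - 2 * δ ^ 2 * t) / (2 * lambdaOfSq δ t))
      (-1 / (4 * lambdaOfSq δ t ^ 3)) t := by
  have hpos := pos ht
  have hnum : HasDerivAt (fun t => 1 - 2 * δ ^ 2 * t) (-(2 * δ ^ 2)) t := by
    simpa using ((hasDerivAt_id t).const_mul (2 * δ ^ 2)).const_sub 1
  refine (hnum.div ((hasDerivAt ht).const_mul 2) (by positivity)).congr_deriv ?_
  field_simp
  linear_combination -16 * δ ^ 2 * sq_eq ht.le

/-- At `t = r²` the left-hand side is `λ_δ''(r) = δ²r⁴(2δ²r² - 3) / λ_δ(r)³`. -/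
theorem radial_second_deriv_neg (hδ : δ ≠ 0) (ht : 0 < t - δ ^ 2 * t ^ 2) :
    2 * ((1 - 2 * δ ^ 2 * t) / (2 * lambdaOfSq δ t)) + 4 * (-1 / (4 * lambdaOfSq δ t ^ 3)) * t
      < 0 := by
  have hpos := pos ht
  have ht_pos : 0 < t := by nlinarith [sq_nonneg (δ * t)]
  have hδt : δ ^ 2 * t < 1 := by nlinarith
  have hidentity : 2 * ((1 - 2 * δ ^ 2 * t) / (2 * lambdaOfSq δ t))
      + 4 * (-1 / (4 * lambdaOfSq δ t ^ 3)) * t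
      = δ ^ 2 * t ^ 2 * (2 * δ ^ 2 * t - 3) / lambdaOfSq δ t ^ 3 := by
    field_simp
    linear_combination (1 - 2 * δ ^ 2 * t) * sq_eq ht.le
  rw [hidentity]
  apply div_neg_of_neg_of_pos _ (by positivity)
  have : 0 < δ ^ 2 * t ^ 2 := by positivity
  nlinarith

end lambdaOfSq

open lambdaOfSq in
/-- **Nondegeneracy of the Hessian of `λ_δ(|x|)` on the annulus** for
`δ ∈ (0, 1/(2√2)]`, where `λ_δ(r) = r √(1 − δ²r²)`: its determinant is nonzero, hence
its rank is `n`, at every point of `A = {1/2 < |x| < 2}`. -/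
theorem hessian_lambda_delta_nondegenerate (n : ℕ) (δ : ℝ)
    (hδ0 : 0 < δ) (hδ : δ ≤ 1 / (2 * Real.sqrt 2))
    (x : EuclideanSpace ℝ (Fin n)) (hx1 : 1 / 2 < ‖x‖) (hx2 : ‖x‖ < 2) :
    (Matrix.of fun j k : Fin n =>
        fderiv ℝ (fun y => fderiv ℝ
          (fun z : EuclideanSpace ℝ (Fin n) => ‖z‖ * Real.sqrt (1 - δ ^ 2 * ‖z‖ ^ 2)) y
          (EuclideanSpace.single k 1)) x (EuclideanSpace.single j 1)).det ≠ 0 ∧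
    (Matrix.of fun j k : Fin n =>
        fderiv ℝ (fun y => fderiv ℝ
          (fun z : EuclideanSpace ℝ (Fin n) => ‖z‖ * Real.sqrt (1 - δ ^ 2 * ‖z‖ ^ 2)) y
          (EuclideanSpace.single k 1)) x (EuclideanSpace.single j 1)).rank = n := by
  have hδ_sq : δ ^ 2 ≤ 1 / 8 := by
    have := pow_le_pow_left₀ hδ0.le hδ 2
    rw [div_pow, mul_pow, Real.sq_sqrt zero_le_two] at this
    linarith
  set s := ‖x‖ ^ 2 with hs
  have hs_pos : 0 < s := by positivity
  have hδs : 2 * δ ^ 2 * s < 1 := by nlinarith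
  have hψ : 0 < s - δ ^ 2 * s ^ 2 := by nlinarith
  have hφ : ∀ᶠ t in 𝓝 s, HasDerivAt (lambdaOfSq δ) ((1 - 2 * δ ^ 2 * t) / (2 * lambdaOfSq δ t)) t :=
    ((isOpen_lt continuous_const (by fun_prop : Continuous fun t : ℝ => t - δ ^ 2 * t ^ 2))
      |>.eventually_mem hψ).mono fun _ ht => hasDerivAt ht
  have hB : 0 < 2 * ((1 - 2 * δ ^ 2 * s) / (2 * lambdaOfSq δ s)) := by
    have := pos hψ
    have : 0 < 1 - 2 * δ ^ 2 * s := by linarith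
    positivity
  have hdot : WithLp.ofLp x ⬝ᵥ WithLp.ofLp x = s := by
    rw [hs, ← real_inner_self_eq_norm_sq, EuclideanSpace.inner_eq_star_dotProduct, star_trivial]
  have hprofile : (fun z : EuclideanSpace ℝ (Fin n) => ‖z‖ * √(1 - δ ^ 2 * ‖z‖ ^ 2))
      = fun z => lambdaOfSq δ (‖z‖ ^ 2) := funext fun z => (apply_sq_eq (norm_nonneg z)).symm
  have hdet : (hessianMatrix (fun z => ‖z‖ * √(1 - δ ^ 2 * ‖z‖ ^ 2)) x).det ≠ 0 := by
    rw [hprofile, hessianMatrix_comp_norm_sq hφ (hasDerivAt_deriv hψ),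
      det_smul_one_add_vecMulVec hB.ne', dotProduct_smul, hdot, smul_eq_mul, one_add_div hB.ne']
    exact mul_ne_zero (pow_ne_zero _ hB.ne')
      (div_neg_of_neg_of_pos (radial_second_deriv_neg hδ0.ne' hψ) hB).ne
  exact ⟨hdet, (rank_of_det_ne_zero hdet).trans (Fintype.card_fin n)⟩
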